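/- Let V be a complex vector space, Θ a nondegenerate alternating ℂ-bilinear form on V, and h : V → V a conjugate-linear involution with Θ(h v, h w) = -conj(Θ(v,w)). Then the imaginary part Im Θ restricts to a nondegenerate real alternating form on the real fixed subspace V^h = {v : h v = v}. -/
import Mathlib


/-- With Θ a nondegenerate alternating ℂ-bilinear form and h a
conjugate-linear involution satisfying Θ(hv, hw) = -conj(Θ(v,w)), the imaginary part of Θ
restricts to a nondegenerate real alternating form on the fixed subspace V^h. -/
theorem stmt5 {V : Type*} [AddCommGroup V] [Module ℂ V]
    (Θ : V →ₗ[ℂ] V →ₗ[ℂ] ℂ) (halt : ∀ v : V, Θ v v = 0)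
    (hnd : ∀ v : V, v ≠ 0 → ∃ w : V, Θ v w ≠ 0)
    (h : V → V)
    (hadd : ∀ v w : V, h (v + w) = h v + h w)
    (hsmul : ∀ (a : ℂ) (v : V), h (a • v) = (starRingEnd ℂ a) • h v)
    (hinv : ∀ v : V, h (h v) = v)
    (hΘ : ∀ v w : V, Θ (h v) (h w) = -(starRingEnd ℂ (Θ v w))) :
    ∀ v : V, h v = v → v ≠ 0 → ∃ w : V, h w = w ∧ (Θ v w).im ≠ 0 := by
  intro v hv hv0
  -- key: for fixed v, w, the real part of Θ v w vanishes
  have key : ∀ w : V, h w = w → (Θ v w).re = 0 := by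
    intro w hw
    have := hΘ v w
    rw [hv, hw] at this
    have hre : (Θ v w).re = -(Θ v w).re := by
      have := congrArg Complex.re this
      simpa using this
    linarith
  obtain ⟨u, hu⟩ := hnd v hv0
  set w1 : V := (1/2 : ℂ) • (u + h u) with hw1def
  set w2 : V := (-Complex.I/2 : ℂ) • (u - h u) with hw2def
  have hfix1 : h w1 = w1 := by
    rw [hw1def, hsmul, hadd, hinv]
    have : (starRingEnd ℂ) (1/2 : ℂ) = (1/2 : ℂ) := by
      simp [Complex.ext_iff]
    rw [this, add_comm (h u) u]
  have hfix2 : h w2 = w2 := by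
    have hsub : h (u - h u) = h u - u := by
      have := hadd (u - h u) (h u)
      rw [sub_add_cancel, hinv] at this
      rw [eq_sub_of_add_eq this.symm]
    have hc : (starRingEnd ℂ) (-Complex.I/2 : ℂ) = (Complex.I/2 : ℂ) := by
      rw [map_div₀, map_neg, Complex.conj_I, Complex.conj_ofNat, neg_neg]
    rw [hw2def, hsmul, hsub, hc]
    module
  have hdecomp : u = w1 + Complex.I • w2 := by
    have hI : (Complex.I * (-Complex.I/2) : ℂ) = (1/2 : ℂ) := by
      linear_combination (-1/2 : ℂ) * Complex.I_mul_I
    rw [hw1def, hw2def, smul_smul, hI]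
    module
  have hsum : Θ v u = Θ v w1 + Complex.I * Θ v w2 := by
    rw [hdecomp]; simp
  by_cases h1 : Θ v w1 = 0
  · have h2 : Θ v w2 ≠ 0 := by
      intro h2
      rw [h1, h2] at hsum
      simp at hsum
      exact hu hsum
    refine ⟨w2, hfix2, ?_⟩
    intro him
    apply h2
    exact Complex.ext (key w2 hfix2) him
  · refine ⟨w1, hfix1, ?_⟩
    intro him
    apply h1
    exact Complex.ext (key w1 hfix1) him
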